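/- Let X = {1,2} with multiplication defined by 1·1 = 2, 1·2 = 1, 2·1 = 1, 2·2 = 1 (the table 2111). A function α : X → X makes X Hom-associative if and only if α is the constant function with value 2. Moreover, this α is not an endomorphism of the magma, i.e., α(x·y) ≠ α(x)·α(y) for some x, y ∈ X. -/
import Mathlib


/-- Magma on {1,2} with table 2111: 1·1=2, 1·2=1, 2·1=1, 2·2=1.
    Element 1 ↦ (0 : Fin 2), element 2 ↦ (1 : Fin 2). -/
def mul3 : Fin 2 → Fin 2 → Fin 2 :=
  fun x y => if x = 0 then (if y = 0 then 1 else 0) else (if y = 0 then 0 else 0)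

theorem stmt_3 :
    (∀ α : Fin 2 → Fin 2,
      (∀ x y z : Fin 2, mul3 (α x) (mul3 y z) = mul3 (mul3 x y) (α z)) ↔
        α = fun _ => 1) ∧
    (∃ x y : Fin 2, (fun _ : Fin 2 => (1 : Fin 2)) (mul3 x y) ≠
        mul3 ((fun _ : Fin 2 => (1 : Fin 2)) x) ((fun _ : Fin 2 => (1 : Fin 2)) y)) := by
  refine ⟨fun α => ⟨fun h => ?_, ?_⟩, ⟨0, 0, by simp [mul3]⟩⟩
  · have h0 := h 0 0 0
    have h1 := h 0 1 0
    have h2 := h 1 0 1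
    have h3 := h 1 1 1
    have h4 := h 0 0 1
    have h5 := h 1 0 0
    have h6 := h 0 1 1
    have h7 := h 1 1 0
    clear h
    funext x
    rcases Fin.exists_fin_two.mp ⟨α 0, rfl⟩ with e0 | e0 <;>
      rcases Fin.exists_fin_two.mp ⟨α 1, rfl⟩ with e1 | e1 <;>
      fin_cases x <;>
      simp_all [mul3]
  · rintro rfl x y z
    fin_cases x <;> fin_cases y <;> fin_cases z <;> simp [mul3]
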